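/- arXiv:1812.00862 — 2 statements merged into one kernel-verified Lean document; each statement's English description precedes it below -/
import Mathlib

section
/- Let W ⊆ (ℝ^N)^S be a linear subspace, ρ > 0, and F_ρ(v) = g(v) + ρ‖Cv‖₂². Suppose μ* satisfies the duality identity inf{ g(v) : v ∈ W, Cv = 0 } = inf_{v ∈ W} ( g(v) + ⟨μ*, Cv⟩ ). Then for every v ∈ W: ‖Cv‖₂ ≤ ‖μ*‖₂/ρ + √( (F_ρ(v) − inf_{w ∈ W} F_ρ(w)) / ρ ). -/
open Finset
open scoped RealInnerProductSpace

/-- Tuples `(u_1,…,u_S) ∈ (ℝ^N)^S`. -/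
abbrev Tup (N S : ℕ) := Fin S → EuclideanSpace ℝ (Fin N)

/-- Index set of pairs `s < s'`. -/
abbrev PairIdx (S : ℕ) := {p : Fin S × Fin S // p.1 < p.2}

/-- Elements of `(ℝ^N)^{S(S−1)/2}`, indexed by the pairs `s < s'`. -/
abbrev PTup (N S : ℕ) := PairIdx S → EuclideanSpace ℝ (Fin N)

/-- Euclidean inner product on pair-indexed tuples. -/
noncomputable def pinner {N S : ℕ} (x y : PTup N S) : ℝ := ∑ p, ⟪x p, y p⟫

/-- The data fidelity `g(u) = Σ_s (1/S)‖Au_s − f‖₂²`. -/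
noncomputable def gfun {N m S : ℕ}
    (A : EuclideanSpace ℝ (Fin N) →L[ℝ] EuclideanSpace ℝ (Fin m))
    (f : EuclideanSpace ℝ (Fin m)) (u : Tup N S) : ℝ :=
  ∑ s, (1 / (S : ℝ)) * ‖A (u s) - f‖ ^ 2


lemma pinner_eq_inner {N S : ℕ} (x y : PTup N S) :
    pinner x y = ⟪(WithLp.equiv 2 (PairIdx S → EuclideanSpace ℝ (Fin N))).symm x,
      (WithLp.equiv 2 (PairIdx S → EuclideanSpace ℝ (Fin N))).symm y⟫ := by
  rw [PiLp.inner_apply]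
  rfl

lemma pinner_self_nonneg {N S : ℕ} (x : PTup N S) : 0 ≤ pinner x x := by
  rw [pinner_eq_inner]; exact real_inner_self_nonneg

lemma pinner_cauchy {N S : ℕ} (x y : PTup N S) :
    pinner x y ≤ Real.sqrt (pinner x x) * Real.sqrt (pinner y y) := by
  rw [pinner_eq_inner, pinner_eq_inner, pinner_eq_inner,
    real_inner_self_eq_norm_mul_norm, real_inner_self_eq_norm_mul_norm,
    Real.sqrt_mul_self (norm_nonneg _), Real.sqrt_mul_self (norm_nonneg _)]
  exact real_inner_le_norm _ _

lemma pinner_zero_right {N S : ℕ} (x : PTup N S) : pinner x (0 : PTup N S) = 0 := by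
  simp [pinner]

lemma gfun_nonneg {N m S : ℕ}
    (A : EuclideanSpace ℝ (Fin N) →L[ℝ] EuclideanSpace ℝ (Fin m))
    (f : EuclideanSpace ℝ (Fin m)) (u : Tup N S) : 0 ≤ gfun A f u := by
  apply Finset.sum_nonneg
  intro s _
  positivity

/-- quadratic penalty estimate.  If `μ*` satisfies the duality identity
`inf{g(v) : v ∈ W, Cv = 0} = inf_{v∈W} (g(v) + ⟨μ*, Cv⟩)`, then for every `v ∈ W`,
`‖Cv‖₂ ≤ ‖μ*‖₂/ρ + √((F_ρ(v) − inf_W F_ρ)/ρ)`, where `F_ρ(v) = g(v) + ρ‖Cv‖₂²`. -/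
theorem penalty_constraint_estimate (N m S : ℕ) (hN : 1 ≤ N) (hm : 1 ≤ m) (hS : 2 ≤ S)
    (A : EuclideanSpace ℝ (Fin N) →L[ℝ] EuclideanSpace ℝ (Fin m))
    (f : EuclideanSpace ℝ (Fin m))
    (c : Fin S → Fin S → ℝ) (hc : ∀ s s', 0 ≤ c s s')
    (hcnz : ∃ p : PairIdx S, c (p : Fin S × Fin S).1 (p : Fin S × Fin S).2 ≠ 0)
    (C : Tup N S →ₗ[ℝ] PTup N S)
    (hC : ∀ (u : Tup N S) (p : PairIdx S),
      C u p = Real.sqrt (c (p : Fin S × Fin S).1 (p : Fin S × Fin S).2) •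
        (u (p : Fin S × Fin S).1 - u (p : Fin S × Fin S).2))
    (W : Submodule ℝ (Tup N S)) (ρ : ℝ) (hρ : 0 < ρ)
    (μstar : PTup N S)
    (hdual : sInf {r : ℝ | ∃ v ∈ W, C v = 0 ∧ r = gfun A f v} =
      sInf {r : ℝ | ∃ v ∈ W, r = gfun A f v + pinner μstar (C v)}) :
    ∀ v ∈ W,
      Real.sqrt (pinner (C v) (C v)) ≤
        Real.sqrt (pinner μstar μstar) / ρ +
          Real.sqrt (((gfun A f v + ρ * pinner (C v) (C v)) -
            sInf {r : ℝ | ∃ w ∈ W, r = gfun A f w + ρ * pinner (C w) (C w)}) / ρ) := by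
  intro v hv
  set t : ℝ := Real.sqrt (pinner (C v) (C v)) with ht
  set a : ℝ := Real.sqrt (pinner μstar μstar) / ρ with ha
  set Fset : Set ℝ := {r : ℝ | ∃ w ∈ W, r = gfun A f w + ρ * pinner (C w) (C w)} with hFset
  set I : ℝ := sInf Fset with hI
  have ht0 : 0 ≤ t := Real.sqrt_nonneg _
  have ha0 : 0 ≤ a := div_nonneg (Real.sqrt_nonneg _) hρ.le
  have htsq : t ^ 2 = pinner (C v) (C v) := Real.sq_sqrt (pinner_self_nonneg _)
  -- Fset nonempty and bounded below by 0
  have hFne : Fset.Nonempty := by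
    refine ⟨gfun A f 0 + ρ * pinner (C 0) (C 0), 0, W.zero_mem, rfl⟩
  have hFlb : ∀ r ∈ Fset, (0 : ℝ) ≤ r := by
    rintro r ⟨w, -, rfl⟩
    have := pinner_self_nonneg (C w)
    have := gfun_nonneg A f w
    nlinarith
  have hFbdd : BddBelow Fset := ⟨0, fun r hr => hFlb r hr⟩
  have hI0 : 0 ≤ I := le_csInf hFne hFlb
  have hIleF : I ≤ gfun A f v + ρ * pinner (C v) (C v) :=
    csInf_le hFbdd ⟨v, hv, rfl⟩
  -- constraint set
  set Gset : Set ℝ := {r : ℝ | ∃ v ∈ W, C v = 0 ∧ r = gfun A f v} with hGset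
  have hGne : Gset.Nonempty := ⟨gfun A f 0, 0, W.zero_mem, map_zero C, rfl⟩
  set D : ℝ := sInf Gset with hD
  have hIleD : I ≤ D := by
    apply le_csInf hGne
    rintro r ⟨w, hw, hCw, rfl⟩
    have : gfun A f w + ρ * pinner (C w) (C w) ∈ Fset := ⟨w, hw, rfl⟩
    have h2 := csInf_le hFbdd this
    rw [hCw, pinner_zero_right] at h2
    linarith
  set Dset : Set ℝ := {r : ℝ | ∃ v ∈ W, r = gfun A f v + pinner μstar (C v)} with hDset
  -- key: in all cases, ρ * t^2 - ρ * a * t ≤ F(v) - I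
  by_cases hbdd : BddBelow Dset
  · -- D ≤ g v + ⟪μ, Cv⟫
    have hDle : D ≤ gfun A f v + pinner μstar (C v) := by
      rw [hdual]
      exact csInf_le hbdd ⟨v, hv, rfl⟩
    have hcs : pinner μstar (C v) ≤ (a * ρ) * t := by
      have := pinner_cauchy μstar (C v)
      rw [ha]
      rw [div_mul_cancel₀ _ (ne_of_gt hρ)]
      exact this
    -- E := (F(v) - I)/ρ  ≥ t^2 - a*t and ≥ 0
    set E : ℝ := ((gfun A f v + ρ * pinner (C v) (C v)) - I) / ρ with hE
    have hE0 : 0 ≤ E := div_nonneg (by linarith) hρ.le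
    have hEge : t ^ 2 - a * t ≤ E := by
      rw [hE, le_div_iff₀ hρ]
      have : I ≤ gfun A f v + pinner μstar (C v) := le_trans hIleD hDle
      nlinarith
    have hsq := Real.sq_sqrt hE0
    have hs0 := Real.sqrt_nonneg E
    nlinarith [sq_nonneg (t - a - Real.sqrt E)]
  · -- unbounded dual: D = 0, so I = 0, and √(F(v)/ρ) ≥ t
    have hD0 : D = 0 := by
      rw [hdual]
      exact Real.sInf_of_not_bddBelow hbdd
    have hI00 : I = 0 := le_antisymm (hD0 ▸ hIleD) hI0
    have hkey : t ≤ Real.sqrt (((gfun A f v + ρ * pinner (C v) (C v)) - I) / ρ) := by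
      rw [ht]
      apply Real.sqrt_le_sqrt
      rw [hI00, sub_zero, le_div_iff₀ hρ]
      have := gfun_nonneg A f v
      nlinarith
    linarith
end

section
/- Let h_1,…,h_S : Ω → ℝ, let L > 0, and set W = max(M,N) and c = √( γ · min_{s} ω_s / (L² W) ). If u* = (u*_1,…,u*_S) minimizes the functional (u_1,…,u_S) ↦ Σ_{s=1}^S [ ‖u_s − h_s‖₂² + (γ ω_s / L²) ‖∇_{a_s} u_s‖₀ ] over all S-tuples of functions Ω → ℝ, then every nonzero directional jump of u* has height at least c; that is, for every s ∈ {1,…,S} and every pixel p ∈ Ω with p + a_s ∈ Ω, either u*_s(p+a_s) = u*_s(p) or |u*_s(p+a_s) − u*_s(p)| ≥ c. -/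
open Finset

/-- The discrete image domain `Ω = {0,…,M−1} × {0,…,N−1} ⊆ ℤ²`. -/
noncomputable def gridDomain (M N : ℕ) : Finset (ℤ × ℤ) :=
  (Finset.Ico (0 : ℤ) (M : ℤ)) ×ˢ (Finset.Ico (0 : ℤ) (N : ℤ))

/-- Pixels of the image domain. -/
abbrev Pix (M N : ℕ) := {p : ℤ × ℤ // p ∈ gridDomain M N}

/-- `‖∇_a u‖₀`: the number of pixels `p ∈ Ω` with `p + a ∈ Ω` and `u (p + a) ≠ u p`. -/
noncomputable def jumpCount (M N : ℕ) (u : Pix M N → ℝ) (a : ℤ × ℤ) : ℕ :=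
  Set.ncard {p : Pix M N |
    ∃ h : (p : ℤ × ℤ) + a ∈ gridDomain M N, u ⟨(p : ℤ × ℤ) + a, h⟩ ≠ u p}

/-!
Fix a jump of `u*_s` at `p`, of height `d`, and let `T` be the ray `p + k a_s`, `k ≥ 1`, inside
`Ω`. Adding a constant `t` to `u*_s` on `T` creates no new `a_s`-jump, so by minimality the
quadratic `|T| t² + 2 t ∑_T (u*_s − h_s)` is nonnegative, which forces the linear term to vanish.
For `t = −d` the jump at `p` disappears, so the penalty `γ ω_s / L²` of one jump is at most
`|T| d² ≤ W d²`.
-/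

theorem apply_le_of_forall_sum_le {ι α β : Type*} [Fintype ι]
    [AddCommMonoid β] [PartialOrder β] [IsOrderedCancelAddMonoid β]
    (F : ι → α → β) (x : ι → α) (hx : ∀ y : ι → α, ∑ i, F i (x i) ≤ ∑ i, F i (y i))
    (i : ι) (b : α) : F i (x i) ≤ F i b := by
  classical
  have h := hx (Function.update x i b)
  have hrest : ∑ j ∈ univ.erase i, F j (Function.update x i b j) = ∑ j ∈ univ.erase i, F j (x j) :=
    sum_congr rfl fun j hj => by rw [Function.update_of_ne (ne_of_mem_erase hj)]
  rw [← add_sum_erase _ _ (mem_univ i), ← add_sum_erase _ _ (mem_univ i),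
    Function.update_self, hrest] at h
  exact le_of_add_le_add_right h

section ShiftOn

variable {α : Type*} [DecidableEq α]

def shiftOn (T : Finset α) (t : ℝ) (u : α → ℝ) : α → ℝ :=
  fun q => u q + if q ∈ T then t else 0

variable [Fintype α]

theorem sum_sq_shiftOn (T : Finset α) (t : ℝ) (u g : α → ℝ) :
    ∑ q, (shiftOn T t u q - g q) ^ 2 =
      ∑ q, (u q - g q) ^ 2 + (#T * t ^ 2 + 2 * t * ∑ q ∈ T, (u q - g q)) := by
  have expand : ∀ q, (shiftOn T t u q - g q) ^ 2 =
      (u q - g q) ^ 2 + if q ∈ T then t ^ 2 + 2 * t * (u q - g q) else 0 := by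
    intro q
    by_cases hq : q ∈ T <;> simp [shiftOn, hq]
    ring
  rw [sum_congr rfl fun q _ => expand q, sum_add_distrib, sum_ite_mem, univ_inter,
    sum_add_distrib, sum_const, nsmul_eq_mul, mul_sum]

theorem sum_sub_eq_zero_of_penalty_shiftOn_le (u g : α → ℝ) (T : Finset α)
    (P : (α → ℝ) → ℝ) (hP : ∀ t, P (shiftOn T t u) ≤ P u)
    (hu : ∀ v, ∑ q, (u q - g q) ^ 2 + P u ≤ ∑ q, (v q - g q) ^ 2 + P v) :
    ∑ q ∈ T, (u q - g q) = 0 := by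
  have hquad : ∀ t : ℝ, 0 ≤ #T * (t * t) + 2 * (∑ q ∈ T, (u q - g q)) * t + 0 := by
    intro t
    have h := hu (shiftOn T t u)
    rw [sum_sq_shiftOn] at h
    linarith [hP t]
  have hdiscrim := discrim_le_zero hquad
  rw [discrim] at hdiscrim
  nlinarith [sq_nonneg (∑ q ∈ T, (u q - g q))]

end ShiftOn

section Ray

variable {M N : ℕ} {a : ℤ × ℤ}

open Classical in
noncomputable def forwardRay (M N : ℕ) (p : Pix M N) (a : ℤ × ℤ) : Finset (Pix M N) :=
  univ.filter fun q => ∃ k : ℤ, 1 ≤ k ∧ (q : ℤ × ℤ) = p + k • a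

theorem mem_forwardRay {p q : Pix M N} :
    q ∈ forwardRay M N p a ↔ ∃ k : ℤ, 1 ≤ k ∧ (q : ℤ × ℤ) = p + k • a := by
  simp [forwardRay]

theorem add_mem_forwardRay {p : Pix M N} (hpa : (p : ℤ × ℤ) + a ∈ gridDomain M N) :
    (⟨p + a, hpa⟩ : Pix M N) ∈ forwardRay M N p a :=
  mem_forwardRay.2 ⟨1, le_rfl, by simp⟩

theorem self_notMem_forwardRay (ha : a ≠ 0) (p : Pix M N) : p ∉ forwardRay M N p a := by
  rintro hp
  obtain ⟨k, hk, hpk⟩ := mem_forwardRay.1 hp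
  obtain hk0 | ha0 := smul_eq_zero.1 (left_eq_add.1 hpk)
  · omega
  · exact ha ha0

theorem add_mem_forwardRay_iff {p q : Pix M N} (hqp : q ≠ p)
    (hqa : (q : ℤ × ℤ) + a ∈ gridDomain M N) :
    (⟨q + a, hqa⟩ : Pix M N) ∈ forwardRay M N p a ↔ q ∈ forwardRay M N p a := by
  simp only [mem_forwardRay]
  constructor
  · rintro ⟨k, hk, hqk⟩
    have hq : (q : ℤ × ℤ) = p + (k - 1) • a := by
      rw [sub_smul, one_smul, add_sub_assoc', ← hqk, add_sub_cancel_right]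
    refine ⟨k - 1, ?_, hq⟩
    by_contra hk1
    exact hqp (Subtype.ext (by rw [hq, show k - 1 = 0 by omega, zero_smul, add_zero]))
  · rintro ⟨k, hk, hqk⟩
    exact ⟨k + 1, by omega, by rw [hqk, add_smul, one_smul, add_assoc]⟩

theorem card_forwardRay_le (ha : a ≠ 0) (p : Pix M N) :
    #(forwardRay M N p a) ≤ {k : ℤ | (p : ℤ × ℤ) + k • a ∈ gridDomain M N}.ncard := by
  set K := {k : ℤ | (p : ℤ × ℤ) + k • a ∈ gridDomain M N}
  have hinj : Function.Injective fun k : ℤ => (p : ℤ × ℤ) + k • a := by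
    intro k l hkl
    have hkl' : (k - l) • a = 0 := by rw [sub_smul, add_left_cancel hkl, sub_self]
    obtain h0 | ha0 := smul_eq_zero.1 hkl'
    · omega
    · exact absurd ha0 ha
  have hsub : Subtype.val '' (forwardRay M N p a : Set (Pix M N)) ⊆
      (fun k : ℤ => (p : ℤ × ℤ) + k • a) '' K := by
    rintro _ ⟨q, hq, rfl⟩
    obtain ⟨k, -, hqk⟩ := mem_forwardRay.1 hq
    exact ⟨k, show _ ∈ gridDomain M N from hqk ▸ q.2, hqk.symm⟩
  have hfin : ((fun k : ℤ => (p : ℤ × ℤ) + k • a) '' K).Finite :=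
    (gridDomain M N).finite_toSet.subset (Set.image_subset_iff.2 fun _ hk => hk)
  calc #(forwardRay M N p a)
      = (Subtype.val '' (forwardRay M N p a : Set (Pix M N))).ncard := by
        rw [Set.ncard_image_of_injective _ Subtype.val_injective, Set.ncard_coe_finset]
    _ ≤ ((fun k : ℤ => (p : ℤ × ℤ) + k • a) '' K).ncard := Set.ncard_le_ncard hsub hfin
    _ = K.ncard := Set.ncard_image_of_injective _ hinj

end Ray

section Jumps

variable {M N : ℕ} {a : ℤ × ℤ}

def jumpSet (M N : ℕ) (u : Pix M N → ℝ) (a : ℤ × ℤ) : Set (Pix M N) :=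
  {p | ∃ h : (p : ℤ × ℤ) + a ∈ gridDomain M N, u ⟨(p : ℤ × ℤ) + a, h⟩ ≠ u p}

theorem jumpCount_eq_ncard_jumpSet (u : Pix M N → ℝ) (a : ℤ × ℤ) :
    jumpCount M N u a = (jumpSet M N u a).ncard := rfl

/-- The indicator of the ray is invariant under `q ↦ q + a` away from `p`. -/
theorem jumpSet_shiftOn_forwardRay_subset {u : Pix M N → ℝ} {p : Pix M N}
    (hp : p ∈ jumpSet M N u a) (t : ℝ) :
    jumpSet M N (shiftOn (forwardRay M N p a) t u) a ⊆ jumpSet M N u a := by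
  rintro q ⟨hqa, hne⟩
  by_cases hqp : q = p
  · exact hqp ▸ hp
  refine ⟨hqa, fun hu => hne ?_⟩
  simp only [shiftOn, hu, add_mem_forwardRay_iff hqp hqa]

theorem ncard_jumpSet_shiftOn_forwardRay_lt (ha : a ≠ 0) {u : Pix M N → ℝ} {p : Pix M N}
    (hpa : (p : ℤ × ℤ) + a ∈ gridDomain M N) (hjump : u ⟨p + a, hpa⟩ ≠ u p) :
    (jumpSet M N (shiftOn (forwardRay M N p a) (u p - u ⟨p + a, hpa⟩) u) a).ncard <
      (jumpSet M N u a).ncard := by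
  have hp : p ∈ jumpSet M N u a := ⟨hpa, hjump⟩
  refine Set.ncard_lt_ncard ((Set.ssubset_iff_of_subset
    (jumpSet_shiftOn_forwardRay_subset hp _)).2 ⟨p, hp, ?_⟩)
  rintro ⟨_, hne⟩
  simp [shiftOn, add_mem_forwardRay, self_notMem_forwardRay ha] at hne

theorem le_card_forwardRay_mul_sq_of_minimizer (ha : a ≠ 0) {A : ℝ} (hA : 0 ≤ A)
    (u g : Pix M N → ℝ)
    (hu : ∀ v, ∑ q, (u q - g q) ^ 2 + A * jumpCount M N u a ≤
      ∑ q, (v q - g q) ^ 2 + A * jumpCount M N v a)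
    (p : Pix M N) (hpa : (p : ℤ × ℤ) + a ∈ gridDomain M N) (hjump : u ⟨p + a, hpa⟩ ≠ u p) :
    A ≤ #(forwardRay M N p a) * (u ⟨p + a, hpa⟩ - u p) ^ 2 := by
  set T := forwardRay M N p a
  have hres : ∑ q ∈ T, (u q - g q) = 0 := by
    refine sum_sub_eq_zero_of_penalty_shiftOn_le u g T (fun v => A * jumpCount M N v a)
      (fun t => mul_le_mul_of_nonneg_left ?_ hA) hu
    rw [jumpCount_eq_ncard_jumpSet, jumpCount_eq_ncard_jumpSet]
    exact_mod_cast Set.ncard_le_ncard (jumpSet_shiftOn_forwardRay_subset ⟨hpa, hjump⟩ t)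
  have hlt : (jumpCount M N (shiftOn T (u p - u ⟨p + a, hpa⟩) u) a : ℝ) + 1 ≤
      jumpCount M N u a := by
    rw [jumpCount_eq_ncard_jumpSet, jumpCount_eq_ncard_jumpSet]
    exact_mod_cast ncard_jumpSet_shiftOn_forwardRay_lt ha hpa hjump
  have h := hu (shiftOn T (u p - u ⟨p + a, hpa⟩) u)
  rw [sum_sq_shiftOn, hres] at h
  nlinarith

end Jumps

/-- any minimizer `u* = (u*_1,…,u*_S)` of
`(u_1,…,u_S) ↦ Σ_s [ ‖u_s − h_s‖₂² + (γω_s/L²)‖∇_{a_s}u_s‖₀ ]` has minimal directional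
jump height `c = √(γ · min_s ω_s / (L² W))` with `W = max(M,N)`: every nonzero
directional jump of `u*` has height at least `c`. -/
theorem minimizer_minimal_jump_height (M N S : ℕ) (hS : 1 ≤ S)
    (a : Fin S → ℤ × ℤ) (ha : ∀ s, a s ≠ 0)
    (hline : ∀ (s : Fin S) (p : ℤ × ℤ),
      Set.ncard {k : ℤ | p + k • a s ∈ gridDomain M N} ≤ max M N)
    (ω : Fin S → ℝ) (hω : ∀ s, 0 < ω s) (γ : ℝ) (hγ : 0 < γ) (L : ℝ)
    (h : Fin S → Pix M N → ℝ)
    (ustar : Fin S → Pix M N → ℝ)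
    (hmin : ∀ u : Fin S → Pix M N → ℝ,
      (∑ s, ((∑ p, (ustar s p - h s p) ^ 2) +
          (γ * ω s / L ^ 2) * (jumpCount M N (ustar s) (a s) : ℝ))) ≤
        ∑ s, ((∑ p, (u s p - h s p) ^ 2) +
          (γ * ω s / L ^ 2) * (jumpCount M N (u s) (a s) : ℝ))) :
    ∀ (s : Fin S) (p : Pix M N) (hq : (p : ℤ × ℤ) + a s ∈ gridDomain M N),
      ustar s ⟨(p : ℤ × ℤ) + a s, hq⟩ = ustar s p ∨
        Real.sqrt (γ * (Finset.univ.inf'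
            (Finset.univ_nonempty_iff.mpr ⟨⟨0, by omega⟩⟩) ω) /
          (L ^ 2 * (max M N : ℝ))) ≤
        |ustar s ⟨(p : ℤ × ℤ) + a s, hq⟩ - ustar s p| := by
  intro s p hq
  refine or_iff_not_imp_left.2 fun hjump => ?_
  set d := ustar s ⟨(p : ℤ × ℤ) + a s, hq⟩ - ustar s p
  have hcomp := apply_le_of_forall_sum_le
    (fun s v => ∑ q, (v q - h s q) ^ 2 + γ * ω s / L ^ 2 * jumpCount M N v (a s)) ustar hmin s
  have hpen := le_card_forwardRay_mul_sq_of_minimizer (ha s)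
    (div_nonneg (mul_nonneg hγ.le (hω s).le) (sq_nonneg L)) (ustar s) (h s) hcomp p hq hjump
  have hcard : (#(forwardRay M N p (a s)) : ℝ) ≤ (max M N : ℝ) := by
    exact_mod_cast (card_forwardRay_le (ha s) p).trans (hline s p)
  have hinf := Finset.inf'_le ω (mem_univ s)
  have hsq : γ * univ.inf' (univ_nonempty_iff.mpr ⟨⟨0, by omega⟩⟩) ω / L ^ 2 ≤ d ^ 2 * (max M N : ℝ) :=
    calc _ ≤ γ * ω s / L ^ 2 := by gcongr
      _ ≤ #(forwardRay M N p (a s)) * d ^ 2 := hpen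
      _ ≤ d ^ 2 * (max M N : ℝ) :=
        (mul_le_mul_of_nonneg_right hcard (sq_nonneg d)).trans_eq (mul_comm _ _)
  calc _ ≤ Real.sqrt (d ^ 2) := by
        rw [← div_div]
        exact Real.sqrt_le_sqrt (div_le_of_le_mul₀ (by positivity) (sq_nonneg d) hsq)
    _ = |d| := Real.sqrt_sq_eq_abs d
end
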